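/- Let L be a semiprime Hom-Lie algebra and let I be a Hom-ideal of L with Ann_L(I) = {0}. Then Ann_L(I^s) = {0} for every s ≥ 1, where I¹ = I and I^k = [I^{k-1}, α(I)] (the span of such brackets) for k ≥ 2. Moreover, any finite intersection of Hom-ideals of L with zero α-annihilator also has zero α-annihilator. -/

import Mathlib

/-- A Hom-Lie algebra structure on a vector space `Q` over a field `𝔽`, with the
twisting map `α` additionally satisfying condition (2.1):
`α [x,y] = [α x, y] = [x, α y]`. -/
structure HomLieAlgebra (𝔽 : Type*) [Field 𝔽] (Q : Type*) [AddCommGroup Q] [Module 𝔽 Q] where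
  bracket : Q →ₗ[𝔽] Q →ₗ[𝔽] Q
  alpha : Q →ₗ[𝔽] Q
  skew : ∀ x y, bracket x y = - bracket y x
  jacobi : ∀ x y z, bracket (alpha x) (bracket y z) + bracket (alpha y) (bracket z x)
      + bracket (alpha z) (bracket x y) = 0
  comm₁ : ∀ x y, alpha (bracket x y) = bracket (alpha x) y
  comm₂ : ∀ x y, alpha (bracket x y) = bracket x (alpha y)

namespace HomLieAlgebra

variable {𝔽 : Type*} [Field 𝔽] {Q : Type*} [AddCommGroup Q] [Module 𝔽 Q]
variable (H : HomLieAlgebra 𝔽 Q)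

/-- `S` is a Hom-subalgebra: a subspace closed under `α` and the bracket. -/
def IsSubalgebra (S : Submodule 𝔽 Q) : Prop :=
  (∀ x ∈ S, H.alpha x ∈ S) ∧ ∀ x ∈ S, ∀ y ∈ S, H.bracket x y ∈ S

/-- `I` is a Hom-ideal of the Hom-subalgebra `L`:
a subspace `I ⊆ L` with `α(I) ⊆ I` and `[I, L] ⊆ I`. -/
def IsIdealOf (L I : Submodule 𝔽 Q) : Prop :=
  I ≤ L ∧ (∀ x ∈ I, H.alpha x ∈ I) ∧ ∀ x ∈ I, ∀ y ∈ L, H.bracket x y ∈ I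

/-- The α-annihilator of the set `S` inside the subalgebra `M`:
`Ann_M(S) = {x ∈ M | [x, α(y)] = 0 for all y ∈ S}`. -/
def annIn (M : Submodule 𝔽 Q) (S : Set Q) : Set Q :=
  {x | x ∈ M ∧ ∀ y ∈ S, H.bracket x (H.alpha y) = 0}

/-- `I` is an essential Hom-ideal of `L`: it hits every nonzero Hom-ideal of `L`. -/
def IsEssentialIdealOf (L I : Submodule 𝔽 Q) : Prop :=
  H.IsIdealOf L I ∧ ∀ J : Submodule 𝔽 Q, H.IsIdealOf L J → J ≠ ⊥ → I ⊓ J ≠ ⊥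

/-- The Hom-Lie algebra `L` is semiprime: `[I, α(I)] ≠ {0}` for every nonzero
Hom-ideal `I` of `L`. -/
def IsSemiprimeOn (L : Submodule 𝔽 Q) : Prop :=
  ∀ I : Submodule 𝔽 Q, H.IsIdealOf L I → I ≠ ⊥ →
    ∃ x ∈ I, ∃ y ∈ I, H.bracket x (H.alpha y) ≠ 0

/-- The Hom-Lie algebra `L` is prime: `[I, α(J)] ≠ {0}` for all nonzero
Hom-ideals `I`, `J` of `L`. -/
def IsPrimeOn (L : Submodule 𝔽 Q) : Prop :=
  ∀ I J : Submodule 𝔽 Q, H.IsIdealOf L I → I ≠ ⊥ → H.IsIdealOf L J → J ≠ ⊥ →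
    ∃ x ∈ I, ∃ y ∈ J, H.bracket x (H.alpha y) ≠ 0

/-- The iterated brackets `[[…[[q,x₁],x₂],…],xₙ]` with `xᵢ ∈ L` (including `q` itself). -/
inductive IsWord (L : Submodule 𝔽 Q) (q : Q) : Q → Prop
  | base : IsWord L q q
  | step {p : Q} (x : Q) : IsWord L q p → x ∈ L → IsWord L q (H.bracket p x)

/-- `_L(q)`: the linear span in `Q` of `q` together with all the iterated brackets
`[[…[[q,x₁],x₂],…],xₙ]` with `xᵢ ∈ L`. -/
def wordSpan (L : Submodule 𝔽 Q) (q : Q) : Submodule 𝔽 Q :=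
  Submodule.span 𝔽 {p | H.IsWord L q p}

/-- `(L : q) = {x ∈ L | [x, α(_L(q))] ⊆ L}`, as a subspace of `Q`. -/
def quotIdeal (L : Submodule 𝔽 Q) (q : Q) : Submodule 𝔽 Q where
  carrier := {x | x ∈ L ∧ ∀ p ∈ H.wordSpan L q, H.bracket x (H.alpha p) ∈ L}
  add_mem' := by
    rintro a b ⟨haL, ha⟩ ⟨hbL, hb⟩
    refine ⟨L.add_mem haL hbL, fun p hp => ?_⟩
    rw [map_add, LinearMap.add_apply]
    exact L.add_mem (ha p hp) (hb p hp)
  zero_mem' := ⟨L.zero_mem, fun p _ => by simp⟩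
  smul_mem' := by
    rintro c a ⟨haL, ha⟩
    refine ⟨L.smul_mem c haL, fun p hp => ?_⟩
    rw [map_smul, LinearMap.smul_apply]
    exact L.smul_mem c (ha p hp)

/-- `Q` is an algebra of quotients of its Hom-subalgebra `L`: for all `p, q ∈ Q` with
`p ≠ 0` there is `x ∈ (L : q)` with `[x, α(p)] ≠ 0`. -/
def IsAlgebraOfQuotients (L : Submodule 𝔽 Q) : Prop :=
  ∀ p q : Q, p ≠ 0 → ∃ x ∈ H.quotIdeal L q, H.bracket x (H.alpha p) ≠ 0

/-- `Q` is a weak algebra of quotients of its Hom-subalgebra `L`: for every nonzero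
`q ∈ Q` there is `x ∈ L` with `0 ≠ [x, α(q)] ∈ L`. -/
def IsWeakAlgebraOfQuotients (L : Submodule 𝔽 Q) : Prop :=
  ∀ q : Q, q ≠ 0 → ∃ x ∈ L, H.bracket x (H.alpha q) ≠ 0 ∧ H.bracket x (H.alpha q) ∈ L

/-- `Q` is ideally absorbed into `L`: for every nonzero `q ∈ Q` there is a Hom-ideal `I`
of `L` with `Ann_L(I) = {0}` and `{0} ≠ [I, α(q)] ⊆ L`. -/
def IsIdeallyAbsorbed (L : Submodule 𝔽 Q) : Prop :=
  ∀ q : Q, q ≠ 0 → ∃ I : Submodule 𝔽 Q, H.IsIdealOf L I ∧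
    H.annIn L (I : Set Q) = {0} ∧
    (∃ y ∈ I, H.bracket y (H.alpha q) ≠ 0) ∧
    ∀ y ∈ I, H.bracket y (H.alpha q) ∈ (L : Set Q)

/-- The inner derivation `ad_q : p ↦ [α(q), p]`. -/
def ad (q : Q) : Module.End 𝔽 Q := H.bracket (H.alpha q)

end HomLieAlgebra

/-- The powers of a Hom-ideal: `idealPow H I 0 = I¹ = I` and
`idealPow H I k = I^{k+1} = [I^k, α(I)]` (the span of such brackets). -/
def idealPow {𝔽 L : Type*} [Field 𝔽] [AddCommGroup L] [Module 𝔽 L]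
    (H : HomLieAlgebra 𝔽 L) (I : Submodule 𝔽 L) : ℕ → Submodule 𝔽 L
  | 0 => I
  | k + 1 => Submodule.span 𝔽
      {z | ∃ a ∈ idealPow H I k, ∃ b ∈ I, z = H.bracket a (H.alpha b)}

/-!
Write `Ann(S) = {x | [x, α S] = 0}`; the annihilator of a Hom-ideal is a Hom-ideal. Suppose
`Ann(J) = Ann(K) = 0` and put `P = [J, α(K)]`, `A = Ann(P)`. The Hom-ideal `A ∩ P` annihilates
itself, so it vanishes by semiprimeness. Hence for `x ∈ A`, `a ∈ J`, `b ∈ K` the element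
`[[x, α a], α b]` of `A ∩ P` is zero: `[x, α a] ∈ Ann(K) = 0`, so `x ∈ Ann(J) = 0`. Thus
`Ann([J, α(K)]) = 0`, which gives the powers `I^{k+1} = [I^k, α(I)]` by induction, and finite
intersections because `[J, α(K)] ⊆ J ∩ K` and `Ann(L) = 0`.
-/

namespace HomLieAlgebra

variable {𝔽 Q : Type*} [Field 𝔽] [AddCommGroup Q] [Module 𝔽 Q] {H : HomLieAlgebra 𝔽 Q}

theorem IsIdealOf.bracket_mem_left {L I : Submodule 𝔽 Q} (hI : H.IsIdealOf L I) {x y : Q}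
    (hx : x ∈ I) (hy : y ∈ L) : H.bracket x y ∈ I :=
  hI.2.2 x hx y hy

theorem IsIdealOf.bracket_mem_right {L I : Submodule 𝔽 Q} (hI : H.IsIdealOf L I) {x y : Q}
    (hx : x ∈ L) (hy : y ∈ I) : H.bracket x y ∈ I := by
  rw [H.skew]
  exact I.neg_mem (hI.bracket_mem_left hy hx)

theorem IsIdealOf.inf {L I J : Submodule 𝔽 Q} (hI : H.IsIdealOf L I) (hJ : H.IsIdealOf L J) :
    H.IsIdealOf L (I ⊓ J) :=
  ⟨inf_le_left.trans hI.1, fun x hx => ⟨hI.2.1 x hx.1, hJ.2.1 x hx.2⟩,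
    fun x hx y hy => ⟨hI.2.2 x hx.1 y hy, hJ.2.2 x hx.2 y hy⟩⟩

variable (H)

theorem isIdealOf_top_top : H.IsIdealOf ⊤ ⊤ :=
  ⟨le_rfl, fun _ _ => trivial, fun _ _ _ _ => trivial⟩

theorem bracket_alpha_left (x y : Q) : H.bracket (H.alpha x) y = H.bracket x (H.alpha y) :=
  (H.comm₁ x y).symm.trans (H.comm₂ x y)

/-- The Hom-Jacobi identity, rewritten as a Leibniz rule for `ad z` acting on `[a, α b]`. -/
theorem bracket_bracket_alpha (a b z : Q) :
    H.bracket (H.bracket a (H.alpha b)) z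
      = H.bracket a (H.alpha (H.bracket b z)) + H.bracket (H.bracket a z) (H.alpha b) := by
  have h₁ : H.bracket (H.bracket a (H.alpha b)) z = -H.bracket (H.alpha z) (H.bracket a b) := by
    rw [← H.comm₂, bracket_alpha_left, H.skew]
  have h₂ : H.bracket (H.bracket a z) (H.alpha b) = H.bracket (H.alpha b) (H.bracket z a) := by
    rw [H.skew _ (H.alpha b), H.skew a z, map_neg, neg_neg]
  rw [h₁, ← bracket_alpha_left, h₂, neg_eq_iff_add_eq_zero, ← add_assoc]
  exact H.jacobi z a b

def annihilator (S : Submodule 𝔽 Q) : Submodule 𝔽 Q where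
  carrier := {x | ∀ y ∈ S, H.bracket x (H.alpha y) = 0}
  add_mem' ha hb y hy := by simp [ha y hy, hb y hy]
  zero_mem' _ _ := by simp
  smul_mem' c _ ha y hy := by simp [ha y hy]

theorem mem_annihilator {S : Submodule 𝔽 Q} {x : Q} :
    x ∈ H.annihilator S ↔ ∀ y ∈ S, H.bracket x (H.alpha y) = 0 :=
  Iff.rfl

theorem annIn_top_eq_zero_iff (S : Submodule 𝔽 Q) :
    H.annIn ⊤ (S : Set Q) = {0} ↔ H.annihilator S = ⊥ := by
  have h : H.annIn ⊤ (S : Set Q) = (H.annihilator S : Set Q) := by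
    ext x
    simp [annIn, mem_annihilator]
  rw [h, ← Submodule.bot_coe (R := 𝔽), SetLike.coe_set_eq]

theorem annihilator_anti {S T : Submodule 𝔽 Q} (h : S ≤ T) :
    H.annihilator T ≤ H.annihilator S :=
  fun _ hx y hy => hx y (h hy)

theorem isIdealOf_top_annihilator {S : Submodule 𝔽 Q} (hS : H.IsIdealOf ⊤ S) :
    H.IsIdealOf ⊤ (H.annihilator S) := by
  refine ⟨le_top, fun x hx y hy => ?_, fun x hx z _ y hy => ?_⟩
  · rw [← H.comm₁, hx y hy, map_zero]
  · have h := H.bracket_bracket_alpha x y z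
    rwa [hx y hy, hx _ (hS.bracket_mem_left hy trivial), map_zero, LinearMap.zero_apply,
      zero_add, eq_comm] at h

theorem eq_bot_of_le_annihilator (hsp : H.IsSemiprimeOn ⊤) {K : Submodule 𝔽 Q}
    (hK : H.IsIdealOf ⊤ K) (hKK : K ≤ H.annihilator K) : K = ⊥ := by
  by_contra hne
  obtain ⟨x, hx, y, hy, hxy⟩ := hsp K hK hne
  exact hxy (hKK hx y hy)

theorem annihilator_top_eq_bot (hsp : H.IsSemiprimeOn ⊤) : H.annihilator ⊤ = ⊥ :=
  H.eq_bot_of_le_annihilator hsp (H.isIdealOf_top_annihilator H.isIdealOf_top_top)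
    (H.annihilator_anti le_top)

/-- `[J, α(K)]`; `idealPow H I (k + 1)` is `bracketSpan (idealPow H I k) I` by definition. -/
def bracketSpan (J K : Submodule 𝔽 Q) : Submodule 𝔽 Q :=
  Submodule.span 𝔽 {z | ∃ a ∈ J, ∃ b ∈ K, z = H.bracket a (H.alpha b)}

theorem bracket_mem_bracketSpan {J K : Submodule 𝔽 Q} {a b : Q} (ha : a ∈ J) (hb : b ∈ K) :
    H.bracket a (H.alpha b) ∈ H.bracketSpan J K :=
  Submodule.subset_span ⟨a, ha, b, hb, rfl⟩

theorem bracketSpan_le_comap {J K P : Submodule 𝔽 Q} (f : Q →ₗ[𝔽] Q)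
    (h : ∀ a ∈ J, ∀ b ∈ K, f (H.bracket a (H.alpha b)) ∈ P) :
    H.bracketSpan J K ≤ P.comap f :=
  Submodule.span_le.2 <| by
    rintro _ ⟨a, ha, b, hb, rfl⟩
    exact h a ha b hb

theorem isIdealOf_top_bracketSpan {J K : Submodule 𝔽 Q} (hJ : H.IsIdealOf ⊤ J)
    (hK : H.IsIdealOf ⊤ K) : H.IsIdealOf ⊤ (H.bracketSpan J K) := by
  refine ⟨le_top, fun x hx => ?_, fun x hx z _ => ?_⟩
  · refine H.bracketSpan_le_comap (P := H.bracketSpan J K) H.alpha (fun a ha b hb => ?_) hx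
    rw [H.comm₁]
    exact H.bracket_mem_bracketSpan (hJ.2.1 a ha) hb
  · refine H.bracketSpan_le_comap (P := H.bracketSpan J K) (H.bracket.flip z)
      (fun a ha b hb => ?_) hx
    rw [LinearMap.flip_apply, bracket_bracket_alpha]
    exact add_mem (H.bracket_mem_bracketSpan ha (hK.bracket_mem_left hb trivial))
      (H.bracket_mem_bracketSpan (hJ.bracket_mem_left ha trivial) hb)

theorem bracketSpan_le_inf {J K : Submodule 𝔽 Q} (hJ : H.IsIdealOf ⊤ J)
    (hK : H.IsIdealOf ⊤ K) : H.bracketSpan J K ≤ J ⊓ K := by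
  refine Submodule.span_le.2 ?_
  rintro _ ⟨a, ha, b, hb, rfl⟩
  exact ⟨hJ.bracket_mem_left ha trivial, hK.bracket_mem_right trivial (hK.2.1 b hb)⟩

theorem annihilator_bracketSpan_eq_bot (hsp : H.IsSemiprimeOn ⊤) {J K : Submodule 𝔽 Q}
    (hJ : H.IsIdealOf ⊤ J) (hK : H.IsIdealOf ⊤ K) (hJ₀ : H.annihilator J = ⊥)
    (hK₀ : H.annihilator K = ⊥) : H.annihilator (H.bracketSpan J K) = ⊥ := by
  set P := H.bracketSpan J K
  have hP := H.isIdealOf_top_bracketSpan hJ hK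
  have hA := H.isIdealOf_top_annihilator hP
  have hAP : H.annihilator P ⊓ P = ⊥ :=
    H.eq_bot_of_le_annihilator hsp (hA.inf hP)
      (inf_le_left.trans (H.annihilator_anti inf_le_right))
  refine eq_bot_iff.2 fun x hx => ?_
  have hxJ : x ∈ H.annihilator J := fun a ha => by
    have hxa : H.bracket x (H.alpha a) ∈ H.annihilator K := fun b hb => by
      have h : H.bracket (H.bracket x (H.alpha a)) (H.alpha b) ∈ H.annihilator P ⊓ P :=
        ⟨hA.bracket_mem_left (hA.bracket_mem_left hx trivial) trivial,
          H.bracket_mem_bracketSpan (hJ.bracket_mem_right trivial (hJ.2.1 a ha)) hb⟩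
      rwa [hAP, Submodule.mem_bot] at h
    rwa [hK₀, Submodule.mem_bot] at hxa
  rwa [hJ₀] at hxJ

theorem annihilator_inf_eq_bot (hsp : H.IsSemiprimeOn ⊤) {J K : Submodule 𝔽 Q}
    (hJ : H.IsIdealOf ⊤ J) (hK : H.IsIdealOf ⊤ K) (hJ₀ : H.annihilator J = ⊥)
    (hK₀ : H.annihilator K = ⊥) : H.annihilator (J ⊓ K) = ⊥ :=
  eq_bot_iff.2 <| (H.annihilator_anti (H.bracketSpan_le_inf hJ hK)).trans
    (H.annihilator_bracketSpan_eq_bot hsp hJ hK hJ₀ hK₀).le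

theorem isIdealOf_top_idealPow {I : Submodule 𝔽 Q} (hI : H.IsIdealOf ⊤ I) (k : ℕ) :
    H.IsIdealOf ⊤ (idealPow H I k) := by
  induction k with
  | zero => exact hI
  | succ k ih => exact H.isIdealOf_top_bracketSpan ih hI

theorem annihilator_idealPow_eq_bot (hsp : H.IsSemiprimeOn ⊤) {I : Submodule 𝔽 Q}
    (hI : H.IsIdealOf ⊤ I) (hI₀ : H.annihilator I = ⊥) (k : ℕ) :
    H.annihilator (idealPow H I k) = ⊥ := by
  induction k with
  | zero => exact hI₀
  | succ k ih =>
    exact H.annihilator_bracketSpan_eq_bot hsp (H.isIdealOf_top_idealPow hI k) hI ih hI₀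

end HomLieAlgebra

/-- In a semiprime Hom-Lie algebra `L`: if a Hom-ideal `I` has `Ann_L(I) = {0}`,
then `Ann_L(I^s) = {0}` for all `s ≥ 1`; moreover any finite intersection of
Hom-ideals with zero α-annihilator has zero α-annihilator. -/
theorem ann_of_powers_and_finite_intersections
    {𝔽 L : Type*} [Field 𝔽] [AddCommGroup L] [Module 𝔽 L]
    (H : HomLieAlgebra 𝔽 L) (hsp : H.IsSemiprimeOn ⊤)
    (I : Submodule 𝔽 L) (hI : H.IsIdealOf ⊤ I)
    (hann : H.annIn ⊤ (I : Set L) = {0}) :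
    (∀ s : ℕ, H.annIn ⊤ ((idealPow H I s : Submodule 𝔽 L) : Set L) = {0}) ∧
    (∀ (n : ℕ) (f : Fin n → Submodule 𝔽 L),
      (∀ i, H.IsIdealOf ⊤ (f i)) → (∀ i, H.annIn ⊤ ((f i : Submodule 𝔽 L) : Set L) = {0}) →
      H.annIn ⊤ (((⨅ i, f i) : Submodule 𝔽 L) : Set L) = {0}) := by
  simp only [HomLieAlgebra.annIn_top_eq_zero_iff] at hann ⊢
  refine ⟨H.annihilator_idealPow_eq_bot hsp hI hann, fun n f hf hf₀ => ?_⟩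
  rw [← Finset.inf_univ_eq_iInf]
  refine (Finset.inf_induction (p := fun K => H.IsIdealOf ⊤ K ∧ H.annihilator K = ⊥)
    ⟨H.isIdealOf_top_top, H.annihilator_top_eq_bot hsp⟩ (fun J hJ K hK => ?_)
    (fun i _ => ⟨hf i, hf₀ i⟩)).2
  exact ⟨hJ.1.inf hK.1, H.annihilator_inf_eq_bot hsp hJ.1 hK.1 hJ.2 hK.2⟩
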